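/- Let A be a bounded linear operator on H. Then η(A)² ≤ min{ ‖ |A|² + |A|⁴ ‖_ber, ‖ |A*|² + |A|⁴ ‖_ber }. -/
import Mathlib


open scoped InnerProductSpace
open ContinuousLinearMap

variable {H : Type*} [NormedAddCommGroup H] [InnerProductSpace ℂ H] [CompleteSpace H]
variable {Ω : Type*} [Nonempty Ω]

/-- Berezin number: `ber(T) = sup_{λ∈Ω} |⟨T k̂_λ, k̂_λ⟩|`. -/
noncomputable def ber (k : Ω → H) (T : H →L[ℂ] H) : ℝ :=
  ⨆ lam : Ω, ‖⟪T (k lam), k lam⟫_ℂ‖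

/-- Berezin norm: `‖T‖_ber = sup_{λ,μ∈Ω} |⟨T k̂_λ, k̂_μ⟩|`. -/
noncomputable def bernorm (k : Ω → H) (T : H →L[ℂ] H) : ℝ :=
  ⨆ p : Ω × Ω, ‖⟪T (k p.1), k p.2⟫_ℂ‖

/-- Least Berezin number: `c(T) = inf_{λ∈Ω} |⟨T k̂_λ, k̂_λ⟩|`. -/
noncomputable def lber (k : Ω → H) (T : H →L[ℂ] H) : ℝ :=
  ⨅ lam : Ω, ‖⟪T (k lam), k lam⟫_ℂ‖

/-- Davis-Wielandt-Berezin radius: `η(T) = sup_{λ∈Ω} √(|⟨T k̂_λ, k̂_λ⟩|² + ‖T k̂_λ‖⁴)`. -/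
noncomputable def eta (k : Ω → H) (T : H →L[ℂ] H) : ℝ :=
  ⨆ lam : Ω, Real.sqrt (‖⟪T (k lam), k lam⟫_ℂ‖ ^ 2 + ‖T (k lam)‖ ^ 4)

/-- The modulus `|A| = (A*A)^{1/2}`. -/
noncomputable def absop (A : H →L[ℂ] H) : H →L[ℂ] H := CFC.sqrt (adjoint A * A)

set_option maxHeartbeats 1000000 in
lemma absop_sq (A : H →L[ℂ] H) : absop A ^ 2 = adjoint A * A := by
  have h : (0 : H →L[ℂ] H) ≤ adjoint A * A := by
    rw [← ContinuousLinearMap.star_eq_adjoint]; exact star_mul_self_nonneg A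
  rw [absop]; exact CFC.sq_sqrt _ h

lemma inner_mul_self (A : H →L[ℂ] H) (x : H) :
    ⟪(adjoint A * A) x, x⟫_ℂ = ((‖A x‖ : ℂ))^2 := by
  rw [ContinuousLinearMap.mul_apply, ContinuousLinearMap.adjoint_inner_left]
  exact_mod_cast inner_self_eq_norm_sq_to_K (𝕜 := ℂ) (A x)

theorem stmt16 (k : Ω → H) (hk : ∀ lam, ‖k lam‖ = 1) (A : H →L[ℂ] H) :
    (eta k A) ^ 2 ≤
      min (bernorm k ((absop A) ^ 2 + (absop A) ^ 4))
        (bernorm k ((absop (adjoint A)) ^ 2 + (absop A) ^ 4)) := by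
  have hB : adjoint (adjoint A * A) = adjoint A * A := by
    simp [ContinuousLinearMap.mul_def, ContinuousLinearMap.adjoint_comp]
  set B := adjoint A * A with hBdef
  -- basic facts about bernorm
  have hbdd : ∀ (T : H →L[ℂ] H),
      BddAbove (Set.range fun p : Ω × Ω => ‖⟪T (k p.1), k p.2⟫_ℂ‖) := by
    intro T
    refine ⟨‖T‖, ?_⟩
    rintro r ⟨p, rfl⟩
    calc ‖⟪T (k p.1), k p.2⟫_ℂ‖ ≤ ‖T (k p.1)‖ * ‖k p.2‖ := norm_inner_le_norm _ _
      _ ≤ (‖T‖ * ‖k p.1‖) * ‖k p.2‖ := by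
          gcongr; exact T.le_opNorm _
      _ = ‖T‖ := by rw [hk, hk]; ring
  have hdiag : ∀ (T : H →L[ℂ] H) (lam : Ω),
      ‖⟪T (k lam), k lam⟫_ℂ‖ ≤ bernorm k T :=
    fun T lam => le_ciSup (hbdd T) (lam, lam)
  -- pointwise computations
  have key : ∀ (C : H →L[ℂ] H) (lam : Ω), ‖⟪A (k lam), k lam⟫_ℂ‖ ≤ ‖C (k lam)‖ →
      ‖⟪A (k lam), k lam⟫_ℂ‖ ^ 2 + ‖A (k lam)‖ ^ 4
        ≤ ‖⟪(adjoint C * C + B ^ 2) (k lam), k lam⟫_ℂ‖ := by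
    intro C lam hC
    set x := k lam with hx
    have hx1 : ‖x‖ = 1 := hk lam
    have e1 : ⟪(adjoint C * C + B ^ 2) x, x⟫_ℂ = ((‖C x‖^2 + ‖B x‖^2 : ℝ) : ℂ) := by
      have e2 : ⟪(B ^ 2) x, x⟫_ℂ = ((‖B x‖ : ℂ))^2 := by
        rw [sq, ContinuousLinearMap.mul_apply]
        nth_rewrite 1 [← hB]
        rw [ContinuousLinearMap.adjoint_inner_left]
        exact_mod_cast inner_self_eq_norm_sq_to_K (𝕜 := ℂ) (B x)
      rw [ContinuousLinearMap.add_apply, inner_add_left, inner_mul_self, e2]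
      push_cast
      ring
    rw [e1]
    have hnorm : ‖((‖C x‖^2 + ‖B x‖^2 : ℝ) : ℂ)‖ = ‖C x‖^2 + ‖B x‖^2 := by
      rw [Complex.norm_real, Real.norm_of_nonneg (by positivity)]
    rw [hnorm]
    -- ‖A x‖^2 ≤ ‖B x‖
    have h2 : ‖A x‖^2 ≤ ‖B x‖ := by
      have := inner_mul_self A x
      have h3 : ‖⟪B x, x⟫_ℂ‖ = ‖A x‖^2 := by
        rw [hBdef, this, ← Complex.ofReal_pow, Complex.norm_real,
          Real.norm_of_nonneg (by positivity)]
      calc ‖A x‖^2 = ‖⟪B x, x⟫_ℂ‖ := h3.symm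
        _ ≤ ‖B x‖ * ‖x‖ := norm_inner_le_norm _ _
        _ = ‖B x‖ := by rw [hx1, mul_one]
    nlinarith [norm_nonneg (A x), norm_nonneg (B x), norm_nonneg (C x),
      norm_nonneg (⟪A x, x⟫_ℂ)]
  -- the two Berezin-norm bounds
  have main : ∀ (C : H →L[ℂ] H), (∀ lam, ‖⟪A (k lam), k lam⟫_ℂ‖ ≤ ‖C (k lam)‖) →
      eta k A ^ 2 ≤ bernorm k (adjoint C * C + B ^ 2) := by
    intro C hC
    set M := bernorm k (adjoint C * C + B ^ 2) with hM
    have hM0 : 0 ≤ M := by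
      obtain ⟨lam⟩ := ‹Nonempty Ω›
      exact le_trans (norm_nonneg _) (hdiag _ lam)
    have heta : eta k A ≤ Real.sqrt M := by
      refine ciSup_le fun lam => ?_
      refine Real.sqrt_le_sqrt ?_
      exact le_trans (key C lam (hC lam)) (hdiag _ lam)
    have h0 : 0 ≤ eta k A := by
      refine Real.iSup_nonneg fun lam => Real.sqrt_nonneg _
    calc eta k A ^ 2 ≤ Real.sqrt M ^ 2 := by gcongr
      _ = M := Real.sq_sqrt hM0
  have hA4 : (absop A) ^ 4 = B ^ 2 := by
    rw [show (4:ℕ) = 2 * 2 from rfl, pow_mul, absop_sq]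
  refine le_min ?_ ?_
  · have h := main A (fun lam => by
      calc ‖⟪A (k lam), k lam⟫_ℂ‖ ≤ ‖A (k lam)‖ * ‖k lam‖ := norm_inner_le_norm _ _
        _ = ‖A (k lam)‖ := by rw [hk, mul_one])
    rwa [absop_sq, hA4]
  · have h := main (adjoint A) (fun lam => by
      have e : ‖⟪A (k lam), k lam⟫_ℂ‖ = ‖⟪(adjoint A) (k lam), k lam⟫_ℂ‖ := by
        rw [ContinuousLinearMap.adjoint_inner_left]
        exact norm_inner_symm _ _
      calc ‖⟪A (k lam), k lam⟫_ℂ‖ = ‖⟪(adjoint A) (k lam), k lam⟫_ℂ‖ := e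
        _ ≤ ‖(adjoint A) (k lam)‖ * ‖k lam‖ := norm_inner_le_norm _ _
        _ = ‖(adjoint A) (k lam)‖ := by rw [hk, mul_one])
    rw [absop_sq, hA4]
    exact h
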